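/- Second-moment counterexample for mixed states (d even, d ≥ 4): let ρ = λ₀|0⟩⟨0| + λ₁|1⟩⟨1| with λ₀ + λ₁ = 1 and λ₀, λ₁ > 0, where |0⟩ = e_1 and |1⟩ = e_{1+d/2}, and let Φ_s = (I⊗Ω)|Φ⟩⟨Φ|(I⊗Ω)†. Then Tr[ρ^{⊗2} Φ_s] = 2λ₀λ₁ ⟨1|Ω|0⟩⟨0|Ωᵀ|1⟩ ≠ 0. Hence ρ^{⊗2} is not annihilated by all non-permutation Brauer elements. -/
import Mathlib


open Matrix Kronecker

noncomputable def Omega (m : ℕ) : Matrix (Fin m ⊕ Fin m) (Fin m ⊕ Fin m) ℂ :=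
  Matrix.fromBlocks 0 1 (-1) 0

noncomputable def PhiVec (n : Type*) [DecidableEq n] : n × n → ℂ :=
  fun p => if p.1 = p.2 then 1 else 0

noncomputable def dyad {n : Type*} (ψ : n → ℂ) : Matrix n n ℂ :=
  Matrix.vecMulVec ψ (star ψ)

noncomputable def PhiS (m : ℕ) :
    Matrix ((Fin m ⊕ Fin m) × (Fin m ⊕ Fin m)) ((Fin m ⊕ Fin m) × (Fin m ⊕ Fin m)) ℂ :=
  ((1 : Matrix (Fin m ⊕ Fin m) (Fin m ⊕ Fin m) ℂ) ⊗ₖ Omega m) *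
    Matrix.vecMulVec (PhiVec (Fin m ⊕ Fin m)) (star (PhiVec (Fin m ⊕ Fin m))) *
    ((1 : Matrix (Fin m ⊕ Fin m) (Fin m ⊕ Fin m) ℂ) ⊗ₖ Omega m)ᴴ

/-- The standard basis vector `e_i ∈ ℂ^n`. -/
noncomputable def e {n : Type*} [DecidableEq n] (i : n) : n → ℂ :=
  fun j => if j = i then 1 else 0

lemma PhiS_apply (m : ℕ) (p q : (Fin m ⊕ Fin m) × (Fin m ⊕ Fin m)) :
    PhiS m p q = Omega m p.2 p.1 * star (Omega m q.2 q.1) := by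
  simp [PhiS, Matrix.mul_apply, Matrix.vecMulVec_apply, PhiVec, Matrix.conjTranspose_apply,
    Matrix.one_apply, Fintype.sum_prod_type, ite_mul, mul_ite, mul_zero, zero_mul,
    Finset.sum_ite_eq, Finset.sum_ite_eq', Pi.star_apply, apply_ite (starRingEnd ℂ), map_zero]

theorem rank_two_state_not_annihilated (m : ℕ) (hm : 2 ≤ m)
    (l0 l1 : ℝ) (hsum : l0 + l1 = 1) (h0 : 0 < l0) (h1 : 0 < l1) :
    (((l0 : ℂ) • dyad (e (Sum.inl ⟨0, by omega⟩ : Fin m ⊕ Fin m)) +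
        (l1 : ℂ) • dyad (e (Sum.inr ⟨0, by omega⟩ : Fin m ⊕ Fin m))) ⊗ₖ
      ((l0 : ℂ) • dyad (e (Sum.inl ⟨0, by omega⟩ : Fin m ⊕ Fin m)) +
        (l1 : ℂ) • dyad (e (Sum.inr ⟨0, by omega⟩ : Fin m ⊕ Fin m))) * PhiS m).trace
      = (2 * l0 * l1 : ℂ) ∧
    (((l0 : ℂ) • dyad (e (Sum.inl ⟨0, by omega⟩ : Fin m ⊕ Fin m)) +
        (l1 : ℂ) • dyad (e (Sum.inr ⟨0, by omega⟩ : Fin m ⊕ Fin m))) ⊗ₖ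
      ((l0 : ℂ) • dyad (e (Sum.inl ⟨0, by omega⟩ : Fin m ⊕ Fin m)) +
        (l1 : ℂ) • dyad (e (Sum.inr ⟨0, by omega⟩ : Fin m ⊕ Fin m))) * PhiS m).trace ≠ 0 := by
  have key : (((l0 : ℂ) • dyad (e (Sum.inl ⟨0, by omega⟩ : Fin m ⊕ Fin m)) +
        (l1 : ℂ) • dyad (e (Sum.inr ⟨0, by omega⟩ : Fin m ⊕ Fin m))) ⊗ₖ
      ((l0 : ℂ) • dyad (e (Sum.inl ⟨0, by omega⟩ : Fin m ⊕ Fin m)) +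
        (l1 : ℂ) • dyad (e (Sum.inr ⟨0, by omega⟩ : Fin m ⊕ Fin m))) * PhiS m).trace
      = (2 * l0 * l1 : ℂ) := by
    simp only [Matrix.trace, Matrix.diag, Matrix.mul_apply, PhiS_apply,
      Matrix.kroneckerMap_apply, Matrix.add_apply, Matrix.smul_apply, dyad,
      Matrix.vecMulVec_apply, e, Pi.star_apply, Fintype.sum_prod_type, smul_eq_mul,
      Omega, Matrix.fromBlocks_apply₁₁, Matrix.fromBlocks_apply₁₂, Matrix.fromBlocks_apply₂₁,
      Matrix.fromBlocks_apply₂₂, Fintype.sum_sum_type, Matrix.one_apply, Matrix.zero_apply,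
      Matrix.neg_apply, apply_ite (starRingEnd ℂ), map_zero, _root_.map_one, _root_.map_neg,
      ite_mul, mul_ite, mul_zero, zero_mul, mul_one, one_mul, mul_neg, neg_mul,
      Finset.sum_ite_eq, Finset.sum_ite_eq', Finset.mem_univ, if_true,
      Finset.sum_neg_distrib, add_zero, zero_add, neg_neg, neg_zero,
      Finset.sum_const_zero]
    simp [Finset.sum_ite_eq, apply_ite (star : ℂ → ℂ), Finset.mul_sum, Finset.sum_ite_eq']
    ring
  refine ⟨key, ?_⟩
  rw [key]
  have : (2 * l0 * l1 : ℝ) ≠ 0 := by positivity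
  exact_mod_cast this
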